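/- arXiv:2503.12103 — 2 statements merged into one kernel-verified Lean document; each statement's English description precedes it below -/
import Mathlib

section
/- For every λ > 0, every q > 0 and every r ∈ (0,1), the following identity holds (all sums and integrals converging absolutely): ∑_{k=0}^∞ ∫₀^∞ (e^{−qy} r^{k+1} − r) · y e^{−λy} (λy)^k/(k+1)! ν(dy) + (σ²λ/2)(r² − r) − σ² q r = (ψ(q + λ(1−r)) − ψ(q + λ) + r·ψ(λ))/λ. (This identifies the series form of the discrete branching mechanism Ψ_d of the intertwined two-type process in the case λ ≤ ρ with its closed form.) -/
open MeasureTheory Set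

/-- Branching mechanism without killing. -/
noncomputable def psi (σ γ : ℝ) (ν : Measure ℝ) (q : ℝ) : ℝ :=
  σ ^ 2 / 2 * q ^ 2 - γ * q +
    ∫ y in Ioi (0 : ℝ),
      (Real.exp (-q * y) - 1 + (if 0 < y ∧ y < 1 then q * y else 0)) ∂ν

private lemma exp_neg_ge {t : ℝ} : 0 ≤ Real.exp (-t) - 1 + t := by
  have := Real.add_one_le_exp (-t); linarith

private lemma exp_neg_quad {t : ℝ} (ht : 0 ≤ t) : Real.exp (-t) - 1 + t ≤ t ^ 2 := by
  rcases le_or_gt t 1 with h | h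
  · have h1 : |(-t)| ≤ 1 := by rw [abs_neg, abs_of_nonneg ht]; exact h
    have h2 := (abs_le.mp (Real.abs_exp_sub_one_sub_id_le h1)).2
    nlinarith [h2]
  · have h2 : Real.exp (-t) ≤ 1 := Real.exp_le_one_iff.mpr (by linarith)
    nlinarith

private lemma gker_abs_bound {a y : ℝ} (ha : 0 < a) (hy : 0 < y) :
    |Real.exp (-a * y) - 1 + (if 0 < y ∧ y < 1 then a * y else 0)|
      ≤ (1 + a ^ 2) * min 1 (y ^ 2) := by
  rcases lt_or_ge y 1 with h1 | h1
  · rw [if_pos ⟨hy, h1⟩]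
    have hay : 0 ≤ a * y := by positivity
    have hmin : min 1 (y ^ 2) = y ^ 2 := min_eq_right (by nlinarith)
    have hne : -a * y = -(a * y) := by ring
    rw [hmin, hne, abs_of_nonneg exp_neg_ge]
    have h2 := exp_neg_quad hay
    nlinarith
  · rw [if_neg (by rintro ⟨-, h⟩; exact absurd h (not_lt.mpr h1))]
    have hmin : min 1 (y ^ 2) = 1 := min_eq_left (by nlinarith)
    have he1 : Real.exp (-a * y) ≤ 1 := Real.exp_le_one_iff.mpr (by nlinarith)
    have he0 : 0 < Real.exp (-a * y) := Real.exp_pos _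
    rw [hmin, add_zero, abs_of_nonpos (by linarith)]
    nlinarith

private lemma gker_meas (a : ℝ) :
    Measurable (fun y : ℝ => Real.exp (-a * y) - 1 + (if 0 < y ∧ y < 1 then a * y else 0)) := by
  apply Measurable.add
  · exact ((measurable_id.const_mul (-a)).exp).sub measurable_const
  · exact Measurable.ite (measurableSet_Ioo (a := (0:ℝ)) (b := 1))
      (measurable_id.const_mul a) measurable_const

private lemma gker_integrable {ν : Measure ℝ}
    (hν : IntegrableOn (fun y => min 1 (y ^ 2)) (Ioi 0) ν) {a : ℝ} (ha : 0 < a) :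
    IntegrableOn (fun y : ℝ =>
      Real.exp (-a * y) - 1 + (if 0 < y ∧ y < 1 then a * y else 0)) (Ioi 0) ν := by
  apply Integrable.mono' (hν.const_mul (1 + a ^ 2)) ((gker_meas a).aestronglyMeasurable)
  filter_upwards [ae_restrict_mem measurableSet_Ioi] with y hy
  rw [Real.norm_eq_abs]
  exact gker_abs_bound ha hy

private noncomputable def Fker (lam q r : ℝ) (k : ℕ) (y : ℝ) : ℝ :=
  (Real.exp (-q * y) * r ^ (k + 1) - r) *
    (y * Real.exp (-lam * y) * (lam * y) ^ k / (Nat.factorial (k + 1) : ℝ))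

private noncomputable def Sfun (lam q r y : ℝ) : ℝ :=
  (Real.exp (-(q + lam * (1 - r)) * y) - Real.exp (-(q + lam) * y)
    + r * Real.exp (-lam * y) - r) / lam

private lemma summable_expShift (x : ℝ) :
    Summable (fun k : ℕ => x ^ (k + 1) / (Nat.factorial (k + 1) : ℝ)) :=
  (Real.summable_pow_div_factorial x).comp_injective Nat.succ_injective

private lemma tsum_expShift (x : ℝ) :
    ∑' k : ℕ, x ^ (k + 1) / (Nat.factorial (k + 1) : ℝ) = Real.exp x - 1 := by
  have hs : Summable (fun n : ℕ => x ^ n / (Nat.factorial n : ℝ)) :=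
    Real.summable_pow_div_factorial x
  have hexp : Real.exp x = ∑' n : ℕ, x ^ n / (Nat.factorial n : ℝ) := by
    rw [Real.exp_eq_exp_ℝ, NormedSpace.exp_eq_tsum_div]
  rw [Summable.tsum_eq_zero_add hs] at hexp
  simp only [pow_zero, Nat.factorial_zero, Nat.cast_one, div_one] at hexp
  linarith

private lemma Fker_eq {lam : ℝ} (hlam : lam ≠ 0) (q r : ℝ) (k : ℕ) (y : ℝ) :
    Fker lam q r k y =
      (Real.exp (-(q + lam) * y) / lam) * ((r * (lam * y)) ^ (k + 1) / (Nat.factorial (k + 1) : ℝ))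
      - (r * Real.exp (-lam * y) / lam) * ((lam * y) ^ (k + 1) / (Nat.factorial (k + 1) : ℝ)) := by
  have hfac : (Nat.factorial (k + 1) : ℝ) ≠ 0 :=
    Nat.cast_ne_zero.mpr (Nat.factorial_ne_zero _)
  have he : Real.exp (-(q + lam) * y) = Real.exp (-q * y) * Real.exp (-lam * y) := by
    rw [← Real.exp_add]; ring_nf
  rw [Fker, he, mul_pow]
  field_simp
  ring

private lemma summable_Fker {lam : ℝ} (hlam : lam ≠ 0) (q r : ℝ) (y : ℝ) :
    Summable (fun k => Fker lam q r k y) := by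
  apply Summable.congr
    (((summable_expShift (r * (lam * y))).mul_left (Real.exp (-(q + lam) * y) / lam)).sub
      ((summable_expShift (lam * y)).mul_left (r * Real.exp (-lam * y) / lam)))
  intro k
  exact (Fker_eq hlam q r k y).symm

private lemma tsum_Fker {lam : ℝ} (hlam : lam ≠ 0) (q r : ℝ) (y : ℝ) :
    ∑' k, Fker lam q r k y = Sfun lam q r y := by
  have h1 := (summable_expShift (r * (lam * y))).mul_left (Real.exp (-(q + lam) * y) / lam)
  have h2 := (summable_expShift (lam * y)).mul_left (r * Real.exp (-lam * y) / lam)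
  calc ∑' k, Fker lam q r k y
      = ∑' k, ((Real.exp (-(q + lam) * y) / lam) *
            ((r * (lam * y)) ^ (k + 1) / (Nat.factorial (k + 1) : ℝ))
          - (r * Real.exp (-lam * y) / lam) *
            ((lam * y) ^ (k + 1) / (Nat.factorial (k + 1) : ℝ))) :=
        tsum_congr (fun k => Fker_eq hlam q r k y)
    _ = (Real.exp (-(q + lam) * y) / lam) * (Real.exp (r * (lam * y)) - 1)
          - (r * Real.exp (-lam * y) / lam) * (Real.exp (lam * y) - 1) := by
        rw [Summable.tsum_sub h1 h2, tsum_mul_left, tsum_mul_left, tsum_expShift, tsum_expShift]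
    _ = Sfun lam q r y := by
        have ha : Real.exp (-(q + lam) * y) * Real.exp (r * (lam * y))
            = Real.exp (-(q + lam * (1 - r)) * y) := by
          rw [← Real.exp_add]; ring_nf
        have hb : Real.exp (-lam * y) * Real.exp (lam * y) = 1 := by
          rw [← Real.exp_add, neg_mul, neg_add_cancel, Real.exp_zero]
        rw [Sfun]
        linear_combination (ha - r * hb) / lam

private lemma Fker_nonpos {lam q r : ℝ} (hlam : 0 ≤ lam) (hq : 0 ≤ q) (hr0 : 0 ≤ r)
    (hr1 : r ≤ 1) (k : ℕ) {y : ℝ} (hy : 0 ≤ y) : Fker lam q r k y ≤ 0 := by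
  rw [Fker]
  apply mul_nonpos_of_nonpos_of_nonneg
  · have h1 : Real.exp (-q * y) ≤ 1 := Real.exp_le_one_iff.mpr (by nlinarith)
    have h2 : r ^ (k + 1) ≤ r := by
      calc r ^ (k + 1) ≤ r ^ 1 := pow_le_pow_of_le_one hr0 hr1 (by omega)
        _ = r := pow_one r
    have h3 : 0 ≤ r ^ (k + 1) := pow_nonneg hr0 _
    nlinarith
  · positivity

private lemma gcomb {lam q r : ℝ} (hlam : lam ≠ 0) {y : ℝ} (hy : 0 < y) :
    (Real.exp (-(q + lam * (1 - r)) * y) - 1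
        + (if 0 < y ∧ y < 1 then (q + lam * (1 - r)) * y else 0))
      - (Real.exp (-(q + lam) * y) - 1 + (if 0 < y ∧ y < 1 then (q + lam) * y else 0))
      + r * (Real.exp (-lam * y) - 1 + (if 0 < y ∧ y < 1 then lam * y else 0))
    = lam * Sfun lam q r y := by
  rw [Sfun]
  rcases lt_or_ge y 1 with h1 | h1
  · rw [if_pos ⟨hy, h1⟩, if_pos ⟨hy, h1⟩, if_pos ⟨hy, h1⟩]
    field_simp
    ring
  · have hn : ¬ (0 < y ∧ y < 1) := by rintro ⟨-, h⟩; exact absurd h (not_lt.mpr h1)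
    rw [if_neg hn, if_neg hn, if_neg hn]
    field_simp
    ring

set_option maxHeartbeats 1000000 in
private lemma Sfun_abs_bound {lam q r : ℝ} (hlam : 0 < lam) (hq : 0 < q) (hr0 : 0 < r)
    (hr1 : r < 1) {y : ℝ} (hy : 0 < y) :
    |Sfun lam q r y| ≤
      ((3 + (q + lam * (1 - r)) ^ 2 + (q + lam) ^ 2 + lam ^ 2) / lam) * min 1 (y ^ 2) := by
  have ha1 : 0 < q + lam * (1 - r) := by nlinarith
  have ha2 : 0 < q + lam := by linarith
  have A := abs_le.mp (gker_abs_bound ha1 hy)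
  have B := abs_le.mp (gker_abs_bound ha2 hy)
  have L := abs_le.mp (gker_abs_bound hlam hy)
  have hm : (0:ℝ) ≤ min 1 (y ^ 2) := le_min (by norm_num) (by positivity)
  set m := min 1 (y ^ 2)
  set ga := Real.exp (-(q + lam * (1 - r)) * y) - 1
      + (if 0 < y ∧ y < 1 then (q + lam * (1 - r)) * y else 0) with hga
  set gb := Real.exp (-(q + lam) * y) - 1 + (if 0 < y ∧ y < 1 then (q + lam) * y else 0) with hgb
  set gl := Real.exp (-lam * y) - 1 + (if 0 < y ∧ y < 1 then lam * y else 0) with hgl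
  have hcomb : ga - gb + r * gl = lam * Sfun lam q r y := gcomb hlam.ne' hy
  have hS : Sfun lam q r y = (ga - gb + r * gl) / lam := by
    rw [hcomb]; field_simp
  have hrl1 := mul_le_mul_of_nonneg_left L.2 hr0.le
  have hrl2 := mul_le_mul_of_nonneg_left L.1 hr0.le
  have f1 : r * ((1 + lam ^ 2) * m) ≤ 1 * ((1 + lam ^ 2) * m) :=
    mul_le_mul_of_nonneg_right hr1.le (mul_nonneg (by positivity) hm)
  have g1 : r * gl ≤ (1 + lam ^ 2) * m := by linarith
  have g2 : -((1 + lam ^ 2) * m) ≤ r * gl := by linarith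
  rw [hS, abs_div, abs_of_pos hlam, div_le_iff₀ hlam]
  have heq : (3 + (q + lam * (1 - r)) ^ 2 + (q + lam) ^ 2 + lam ^ 2) / lam * m * lam
      = (3 + (q + lam * (1 - r)) ^ 2 + (q + lam) ^ 2 + lam ^ 2) * m := by
    field_simp
  rw [heq, abs_le]
  constructor
  · linarith [A.1, B.2, g2]
  · linarith [A.2, B.1, g1]

private lemma abs_Fker_le {lam q r : ℝ} (hlam : 0 < lam) (hq : 0 < q) (hr0 : 0 < r)
    (hr1 : r < 1) (k : ℕ) {y : ℝ} (hy : 0 < y) :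
    |Fker lam q r k y| ≤ -Sfun lam q r y := by
  have hs := (summable_Fker hlam.ne' q r y).neg
  have h := Summable.le_tsum hs k (fun j _ =>
    neg_nonneg.mpr (Fker_nonpos hlam.le hq.le hr0.le hr1.le j hy.le))
  rw [tsum_neg, tsum_Fker hlam.ne'] at h
  rw [abs_of_nonpos (Fker_nonpos hlam.le hq.le hr0.le hr1.le k hy.le)]
  exact h

private lemma Fker_meas (lam q r : ℝ) (k : ℕ) : Measurable (Fker lam q r k) := by
  unfold Fker
  fun_prop

private lemma Fker_integrable {ν : Measure ℝ}
    (hν : IntegrableOn (fun y => min 1 (y ^ 2)) (Ioi 0) ν)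
    {lam q r : ℝ} (hlam : 0 < lam) (hq : 0 < q) (hr0 : 0 < r) (hr1 : r < 1) (k : ℕ) :
    IntegrableOn (Fker lam q r k) (Ioi 0) ν := by
  apply Integrable.mono'
    (hν.const_mul ((3 + (q + lam * (1 - r)) ^ 2 + (q + lam) ^ 2 + lam ^ 2) / lam))
    ((Fker_meas lam q r k).aestronglyMeasurable)
  filter_upwards [ae_restrict_mem measurableSet_Ioi] with y hy
  rw [Real.norm_eq_abs]
  calc |Fker lam q r k y| ≤ -Sfun lam q r y := abs_Fker_le hlam hq hr0 hr1 k hy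
    _ ≤ |Sfun lam q r y| := neg_le_abs _
    _ ≤ _ := Sfun_abs_bound hlam hq hr0 hr1 hy

private lemma Sfun_meas (lam q r : ℝ) : Measurable (fun y => Sfun lam q r y) := by
  unfold Sfun
  fun_prop

/-- Series form of the discrete branching mechanism `Ψ_d` in the case `λ ≤ ρ` equals its
closed form `(ψ(q+λ(1−r)) − ψ(q+λ) + rψ(λ))/λ`, all sums and integrals converging
absolutely. -/
theorem PsiD_series_eq_closed_form_lam_le_rho
    (σ γ : ℝ) (hσ : 0 ≤ σ) (ν : Measure ℝ)
    (hν : IntegrableOn (fun y => min 1 (y ^ 2)) (Ioi 0) ν)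
    (lam q r : ℝ) (hlam : 0 < lam) (hq : 0 < q) (hr : r ∈ Ioo (0 : ℝ) 1) :
    (∀ k : ℕ, IntegrableOn (fun y =>
        (Real.exp (-q * y) * r ^ (k + 1) - r) *
          (y * Real.exp (-lam * y) * (lam * y) ^ k / (Nat.factorial (k + 1) : ℝ)))
        (Ioi 0) ν) ∧
    Summable (fun k : ℕ => ∫ y in Ioi (0 : ℝ),
        |Real.exp (-q * y) * r ^ (k + 1) - r| *
          (y * Real.exp (-lam * y) * (lam * y) ^ k / (Nat.factorial (k + 1) : ℝ)) ∂ν) ∧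
    (∀ a ∈ ({q + lam * (1 - r), q + lam, lam} : Set ℝ),
      IntegrableOn (fun y =>
        Real.exp (-a * y) - 1 + (if 0 < y ∧ y < 1 then a * y else 0)) (Ioi 0) ν) ∧
    (∑' k : ℕ, ∫ y in Ioi (0 : ℝ),
        (Real.exp (-q * y) * r ^ (k + 1) - r) *
          (y * Real.exp (-lam * y) * (lam * y) ^ k / (Nat.factorial (k + 1) : ℝ)) ∂ν)
      + σ ^ 2 * lam / 2 * (r ^ 2 - r) - σ ^ 2 * q * r
      = (psi σ γ ν (q + lam * (1 - r)) - psi σ γ ν (q + lam) + r * psi σ γ ν lam) / lam := by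
  obtain ⟨hr0, hr1⟩ := hr
  have ha1 : 0 < q + lam * (1 - r) := by nlinarith
  have ha2 : 0 < q + lam := by linarith
  set C : ℝ := (3 + (q + lam * (1 - r)) ^ 2 + (q + lam) ^ 2 + lam ^ 2) / lam with hC
  have hC0 : 0 < C := by positivity
  -- the key finiteness fact
  have key : ∑' k : ℕ, ∫⁻ y in Ioi (0:ℝ), ‖Fker lam q r k y‖₊ ∂ν ≠ ⊤ := by
    have hb : ∫⁻ y in Ioi (0:ℝ), ∑' k : ℕ, (‖Fker lam q r k y‖₊ : ENNReal) ∂ν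
        ≤ ∫⁻ y in Ioi (0:ℝ), ENNReal.ofReal (C * min 1 (y ^ 2)) ∂ν := by
      apply lintegral_mono_ae
      filter_upwards [ae_restrict_mem measurableSet_Ioi] with y hy
      have h1 : ∀ k : ℕ, (‖Fker lam q r k y‖₊ : ENNReal)
          = ENNReal.ofReal (-(Fker lam q r k y)) := by
        intro k
        rw [← nnnorm_neg, ← enorm_eq_nnnorm, Real.enorm_eq_ofReal
          (neg_nonneg.mpr (Fker_nonpos hlam.le hq.le hr0.le hr1.le k (le_of_lt hy)))]
      calc ∑' k : ℕ, (‖Fker lam q r k y‖₊ : ENNReal)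
          = ∑' k : ℕ, ENNReal.ofReal (-(Fker lam q r k y)) := tsum_congr h1
        _ = ENNReal.ofReal (∑' k : ℕ, -(Fker lam q r k y)) :=
            (ENNReal.ofReal_tsum_of_nonneg
              (fun k => neg_nonneg.mpr (Fker_nonpos hlam.le hq.le hr0.le hr1.le k (le_of_lt hy)))
              (summable_Fker hlam.ne' q r y).neg).symm
        _ = ENNReal.ofReal (-(Sfun lam q r y)) := by rw [tsum_neg, tsum_Fker hlam.ne']
        _ ≤ ENNReal.ofReal (C * min 1 (y ^ 2)) :=
            ENNReal.ofReal_le_ofReal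
              ((neg_le_abs _).trans (Sfun_abs_bound hlam hq hr0 hr1 hy))
    have hfin : ∫⁻ y in Ioi (0:ℝ), ENNReal.ofReal (C * min 1 (y ^ 2)) ∂ν < ⊤ := by
      have hint := (hν.const_mul C).hasFiniteIntegral
      refine lt_of_eq_of_lt ?_ hint
      apply lintegral_congr
      intro y
      rw [Real.enorm_eq_ofReal]
      positivity
    rw [← lintegral_tsum (fun k => ((Fker_meas lam q r k).nnnorm.coe_nnreal_ennreal).aemeasurable)]
    exact (lt_of_le_of_lt hb hfin).ne
  -- part 1
  have part1 : ∀ k : ℕ, IntegrableOn (fun y =>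
      (Real.exp (-q * y) * r ^ (k + 1) - r) *
        (y * Real.exp (-lam * y) * (lam * y) ^ k / (Nat.factorial (k + 1) : ℝ)))
      (Ioi 0) ν := fun k => Fker_integrable hν hlam hq hr0 hr1 k
  refine ⟨part1, ?_, ?_, ?_⟩
  -- part 2
  · have e1 : ∀ k : ℕ, (∫ y in Ioi (0:ℝ),
        |Real.exp (-q * y) * r ^ (k + 1) - r| *
          (y * Real.exp (-lam * y) * (lam * y) ^ k / (Nat.factorial (k + 1) : ℝ)) ∂ν)
        = (∫⁻ y in Ioi (0:ℝ), ‖Fker lam q r k y‖₊ ∂ν).toReal := by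
      intro k
      simp_rw [← enorm_eq_nnnorm]
      rw [← integral_norm_eq_lintegral_enorm
        ((Fker_meas lam q r k).aestronglyMeasurable.restrict)]
      apply setIntegral_congr_fun measurableSet_Ioi
      intro y hy
      have hy' : (0:ℝ) < y := hy
      have hB : 0 ≤ y * Real.exp (-lam * y) * (lam * y) ^ k / (Nat.factorial (k + 1) : ℝ) := by
        apply div_nonneg _ (by positivity)
        apply mul_nonneg (mul_nonneg (le_of_lt hy') (Real.exp_pos _).le)
        exact pow_nonneg (mul_nonneg hlam.le (le_of_lt hy')) _
      show |Real.exp (-q * y) * r ^ (k + 1) - r| *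
          (y * Real.exp (-lam * y) * (lam * y) ^ k / (Nat.factorial (k + 1) : ℝ))
        = ‖Fker lam q r k y‖
      rw [Real.norm_eq_abs, Fker, abs_mul, abs_of_nonneg hB]
    apply Summable.congr (ENNReal.summable_toReal key)
    intro k
    exact (e1 k).symm
  -- part 3
  · intro a ha
    simp only [mem_insert_iff, mem_singleton_iff] at ha
    rcases ha with h | h | h <;> subst h
    · exact gker_integrable hν ha1
    · exact gker_integrable hν ha2
    · exact gker_integrable hν hlam
  -- part 4
  · have hswap : (∑' k : ℕ, ∫ y in Ioi (0 : ℝ),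
        (Real.exp (-q * y) * r ^ (k + 1) - r) *
          (y * Real.exp (-lam * y) * (lam * y) ^ k / (Nat.factorial (k + 1) : ℝ)) ∂ν)
        = ∫ y in Ioi (0:ℝ), Sfun lam q r y ∂ν := by
      show (∑' k : ℕ, ∫ y in Ioi (0:ℝ), Fker lam q r k y ∂ν) = _
      rw [← integral_tsum (fun k => (Fker_meas lam q r k).aestronglyMeasurable.restrict) key]
      apply setIntegral_congr_fun measurableSet_Ioi
      intro y _
      exact tsum_Fker hlam.ne' q r y
    have i1 := gker_integrable hν ha1
    have i2 := gker_integrable hν ha2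
    have i3 := gker_integrable hν hlam
    have i12 : IntegrableOn (fun y : ℝ => (Real.exp (-(q + lam * (1 - r)) * y) - 1
          + (if 0 < y ∧ y < 1 then (q + lam * (1 - r)) * y else 0))
        - (Real.exp (-(q + lam) * y) - 1 + (if 0 < y ∧ y < 1 then (q + lam) * y else 0)))
        (Ioi 0) ν := i1.sub i2
    have i3' : IntegrableOn (fun y : ℝ => r * (Real.exp (-lam * y) - 1
          + (if 0 < y ∧ y < 1 then lam * y else 0))) (Ioi 0) ν := i3.const_mul r
    have hcomb : lam * (∫ y in Ioi (0:ℝ), Sfun lam q r y ∂ν)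
        = (∫ y in Ioi (0:ℝ), (Real.exp (-(q + lam * (1 - r)) * y) - 1
          + (if 0 < y ∧ y < 1 then (q + lam * (1 - r)) * y else 0)) ∂ν)
        - (∫ y in Ioi (0:ℝ), (Real.exp (-(q + lam) * y) - 1
          + (if 0 < y ∧ y < 1 then (q + lam) * y else 0)) ∂ν)
        + r * (∫ y in Ioi (0:ℝ), (Real.exp (-lam * y) - 1
          + (if 0 < y ∧ y < 1 then lam * y else 0)) ∂ν) := by
      calc lam * (∫ y in Ioi (0:ℝ), Sfun lam q r y ∂ν)
          = ∫ y in Ioi (0:ℝ), lam * Sfun lam q r y ∂ν := (integral_const_mul lam _).symm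
        _ = ∫ y in Ioi (0:ℝ), ((Real.exp (-(q + lam * (1 - r)) * y) - 1
              + (if 0 < y ∧ y < 1 then (q + lam * (1 - r)) * y else 0))
            - (Real.exp (-(q + lam) * y) - 1 + (if 0 < y ∧ y < 1 then (q + lam) * y else 0))
            + r * (Real.exp (-lam * y) - 1 + (if 0 < y ∧ y < 1 then lam * y else 0))) ∂ν :=
            setIntegral_congr_fun measurableSet_Ioi (fun y hy => (gcomb hlam.ne' hy).symm)
        _ = _ := by rw [integral_add i12 i3', integral_sub i1 i2, integral_const_mul]
    rw [hswap]
    simp only [psi]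
    rw [eq_div_iff hlam.ne']
    linear_combination hcomb
end

section
/- Let (γ; b, σ, d, κ, 𝗄; π, ρ) be admissible parameters and set c_{ρ,1} := b + ∫_{(0,1)} y ρ(dy,{0}) and c_{ρ,2} := ρ([1,∞)×{0}) + ∑_{k≥1} ρ([0,∞)×{k}) + 𝗄. Then for every q ∈ (0,∞) and every η ∈ (0,∞), −e^{η} Ψ_d(q, e^{−η}) ≤ c_{ρ,1} q + c_{ρ,2}. -/
open MeasureTheory Set

/-- Admissibility of the parameters `(γ; b, σ, d, κ, 𝗄; π, ρ)`. -/
def Admissible (γ b σ d κ kk : ℝ) (π ρm : Measure (ℝ × ℕ)) : Prop :=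
  0 ≤ b ∧ 0 ≤ σ ∧ 0 ≤ d ∧ 0 ≤ κ ∧ 0 ≤ kk ∧
  IntegrableOn (fun p : ℝ × ℕ => min 1 (p.1 ^ 2)) (Ici (0 : ℝ) ×ˢ ({0} : Set ℕ)) π ∧
  π (Ici (0 : ℝ) ×ˢ {k : ℕ | 1 ≤ k}) < ⊤ ∧
  IntegrableOn (fun p : ℝ × ℕ => min 1 p.1) (Ici (0 : ℝ) ×ˢ ({0} : Set ℕ)) ρm ∧
  ρm (Ici (0 : ℝ) ×ˢ {k : ℕ | 1 ≤ k}) < ⊤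

/-- `Ψ_d(q,r)`. -/
noncomputable def PsiD (b d kk : ℝ) (ρm : Measure (ℝ × ℕ)) (q r : ℝ) : ℝ :=
  (∫ p in Ici (0 : ℝ) ×ˢ (univ : Set ℕ),
      (Real.exp (-q * p.1) * r ^ (p.2 + 1) - r) ∂ρm)
    - b * q * r + d * (1 - r) - kk * r

/-- Upper bound `−e^{η} Ψ_d(q, e^{−η}) ≤ c_{ρ,1} q + c_{ρ,2}` with
`c_{ρ,1} = b + ∫_{(0,1)} y ρ(dy,{0})` and
`c_{ρ,2} = ρ([1,∞)×{0}) + ∑_{k≥1} ρ([0,∞)×{k}) + 𝗄`. -/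
theorem neg_barPsiD_upper_bound
    (γ b σ d κ kk : ℝ) (π ρm : Measure (ℝ × ℕ))
    (hadm : Admissible γ b σ d κ kk π ρm)
    (q η : ℝ) (hq : 0 < q) (hη : 0 < η) :
    -(Real.exp η * PsiD b d kk ρm q (Real.exp (-η))) ≤
      (b + ∫ p in Ioo (0 : ℝ) 1 ×ˢ ({0} : Set ℕ), p.1 ∂ρm) * q +
        ((ρm (Ici (1 : ℝ) ×ˢ ({0} : Set ℕ))).toReal
          + (ρm (Ici (0 : ℝ) ×ˢ {k : ℕ | 1 ≤ k})).toReal + kk) := by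
  obtain ⟨hb, hσ, hd, hκ, hkk, hπ2, hπ1, hρ0, hρ1⟩ := hadm
  set r : ℝ := Real.exp (-η) with hrdef
  have hr0 : 0 < r := Real.exp_pos _
  have hr1 : r < 1 := by rw [hrdef, Real.exp_lt_one_iff]; linarith
  have her : Real.exp η * r = 1 := by
    rw [hrdef, ← Real.exp_add]; simp
  set g : ℝ × ℕ → ℝ := fun p => 1 - Real.exp (-q * p.1) * r ^ p.2 with hgdef
  -- sets
  set S : Set (ℝ × ℕ) := Ici (0 : ℝ) ×ˢ (univ : Set ℕ) with hSdef
  set T0 : Set (ℝ × ℕ) := Ici (0 : ℝ) ×ˢ ({0} : Set ℕ) with hT0def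
  set T1 : Set (ℝ × ℕ) := Ici (0 : ℝ) ×ˢ {k : ℕ | 1 ≤ k} with hT1def
  set P0 : Set (ℝ × ℕ) := ({0} : Set ℝ) ×ˢ ({0} : Set ℕ) with hP0def
  set P1 : Set (ℝ × ℕ) := Ioo (0 : ℝ) 1 ×ˢ ({0} : Set ℕ) with hP1def
  set P2 : Set (ℝ × ℕ) := Ici (1 : ℝ) ×ˢ ({0} : Set ℕ) with hP2def
  have hm0 : MeasurableSet ({0} : Set ℕ) := measurableSet_singleton 0
  have hm1 : MeasurableSet {k : ℕ | 1 ≤ k} := (Set.to_countable _).measurableSet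
  have hT0m : MeasurableSet T0 := measurableSet_Ici.prod hm0
  have hT1m : MeasurableSet T1 := measurableSet_Ici.prod hm1
  have hP0m : MeasurableSet P0 := (measurableSet_singleton 0).prod hm0
  have hP1m : MeasurableSet P1 := measurableSet_Ioo.prod hm0
  have hP2m : MeasurableSet P2 := measurableSet_Ici.prod hm0
  have hgm : Measurable g := by
    apply Measurable.sub measurable_const
    exact ((measurable_fst.const_mul (-q)).exp).mul (Measurable.const_pow measurable_snd r)
  -- pointwise bounds
  have hgle1 : ∀ p : ℝ × ℕ, g p ≤ 1 := by
    intro p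
    have : (0:ℝ) ≤ Real.exp (-q * p.1) * r ^ p.2 := by positivity
    simp only [hgdef]; linarith
  have hg0 : ∀ p : ℝ × ℕ, 0 ≤ p.1 → 0 ≤ g p := by
    intro p hp
    have h1 : Real.exp (-q * p.1) ≤ 1 := Real.exp_le_one_iff.2 (by nlinarith)
    have h2 : r ^ p.2 ≤ 1 := pow_le_one₀ hr0.le hr1.le
    have h3 : 0 ≤ r ^ p.2 := by positivity
    have h4 : 0 < Real.exp (-q * p.1) := Real.exp_pos _
    simp only [hgdef]; nlinarith
  have hgqy : ∀ p : ℝ × ℕ, p.2 = 0 → g p ≤ q * p.1 := by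
    intro p hp2
    have := Real.add_one_le_exp (-(q * p.1))
    simp only [hgdef, hp2, pow_zero, mul_one, neg_mul]
    linarith
  -- integrability on T0
  have hIntT0 : IntegrableOn g T0 ρm := by
    apply Integrable.mono' (hρ0.const_mul (max 1 q))
    · exact hgm.aestronglyMeasurable
    · filter_upwards [ae_restrict_mem hT0m] with p hp
      obtain ⟨hp1, hp2⟩ := hp
      simp only [mem_Ici] at hp1
      simp only [mem_singleton_iff] at hp2
      rw [Real.norm_eq_abs, abs_of_nonneg (hg0 p hp1)]
      rcases le_total p.1 1 with h | h
      · have h1 : g p ≤ q * p.1 := hgqy p hp2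
        have h2 : min 1 p.1 = p.1 := min_eq_right h
        have h3 : q ≤ max 1 q := le_max_right _ _
        rw [h2]
        nlinarith
      · have h2 : min 1 p.1 = 1 := min_eq_left h
        have h3 : (1:ℝ) ≤ max 1 q := le_max_left _ _
        rw [h2]
        have := hgle1 p
        linarith
  -- integrability on T1
  have hIntT1 : IntegrableOn g T1 ρm := by
    apply Integrable.mono' (g := fun _ => (1:ℝ))
      (integrableOn_const hρ1.ne)
    · exact hgm.aestronglyMeasurable
    · filter_upwards [ae_restrict_mem hT1m] with p hp
      obtain ⟨hp1, _⟩ := hp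
      simp only [mem_Ici] at hp1
      rw [Real.norm_eq_abs, abs_of_nonneg (hg0 p hp1)]
      exact hgle1 p
  -- subset relations
  have hP0sub : P0 ⊆ T0 := prod_mono_left (by simp)
  have hP1sub : P1 ⊆ T0 := prod_mono_left (fun x hx => le_of_lt hx.1)
  have hP2sub : P2 ⊆ T0 := prod_mono_left (fun x hx => by
    simp only [mem_Ici] at hx ⊢; linarith)
  -- decompositions
  have hIci : Ici (0:ℝ) = ({0} : Set ℝ) ∪ Ioo 0 1 ∪ Ici 1 := by
    ext x
    simp only [mem_Ici, mem_union, mem_singleton_iff, mem_Ioo]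
    constructor
    · intro hx
      rcases eq_or_lt_of_le hx with h | h
      · exact Or.inl (Or.inl h.symm)
      · rcases lt_or_ge x 1 with h1 | h1
        · exact Or.inl (Or.inr ⟨h, h1⟩)
        · exact Or.inr h1
    · rintro ((h | ⟨h, _⟩) | h) <;> linarith
  have hT0split : T0 = P0 ∪ P1 ∪ P2 := by
    rw [hT0def, hIci, union_prod, union_prod]
  have hSsplit : S = T0 ∪ T1 := by
    rw [hSdef, hT0def, hT1def, ← prod_union]
    congr 1
    ext k
    simp only [mem_union, mem_singleton_iff, mem_setOf_eq, mem_univ, iff_true]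
    exact iff_of_true trivial (Nat.eq_zero_or_pos k)
  -- disjointness
  have hd01 : Disjoint P0 P1 := by
    rw [Set.disjoint_left]
    rintro p ⟨h1, _⟩ ⟨h2, _⟩
    simp only [mem_singleton_iff] at h1
    simp only [mem_Ioo] at h2
    linarith [h2.1, h1.le]
  have hd012 : Disjoint (P0 ∪ P1) P2 := by
    rw [Set.disjoint_left]
    rintro p (⟨h1, _⟩ | ⟨h1, _⟩) ⟨h2, _⟩ <;>
      simp only [mem_singleton_iff, mem_Ioo, mem_Ici] at h1 h2
    · linarith [h1 ▸ h2]
    · linarith [h1.2]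
  have hdT : Disjoint T0 T1 := by
    rw [Set.disjoint_left]
    rintro p ⟨_, h1⟩ ⟨_, h2⟩
    simp only [mem_singleton_iff] at h1
    simp only [mem_setOf_eq] at h2
    omega
  -- split of the integral
  have hsplit : ∫ p in S, g p ∂ρm =
      ((∫ p in P0, g p ∂ρm + ∫ p in P1, g p ∂ρm) + ∫ p in P2, g p ∂ρm)
        + ∫ p in T1, g p ∂ρm := by
    rw [hSsplit, setIntegral_union hdT hT1m (hT0split ▸ hIntT0) hIntT1]
    congr 1
    rw [hT0split,
      setIntegral_union hd012 hP2m
        ((hIntT0.mono_set hP0sub).union (hIntT0.mono_set hP1sub))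
        (hIntT0.mono_set hP2sub),
      setIntegral_union hd01 hP1m (hIntT0.mono_set hP0sub)
        (hIntT0.mono_set hP1sub)]
  -- ∫ over P0 is zero
  have hI0 : ∫ p in P0, g p ∂ρm = 0 := by
    rw [setIntegral_congr_fun hP0m (g := fun _ => (0:ℝ))]
    · simp
    · rintro ⟨y, k⟩ ⟨hy, hk⟩
      simp only [mem_singleton_iff] at hy hk
      simp [hgdef, hy, hk]
  -- ∫ over P1 bound
  have hyInt : IntegrableOn (fun p : ℝ × ℕ => p.1) P1 ρm := by
    apply (hρ0.mono_set hP1sub).congr_fun _ hP1m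
    rintro ⟨y, k⟩ ⟨hy, _⟩
    simp only [mem_Ioo] at hy
    exact min_eq_right hy.2.le
  have hI1 : ∫ p in P1, g p ∂ρm ≤ q * ∫ p in P1, p.1 ∂ρm := by
    rw [← integral_const_mul]
    apply setIntegral_mono_on (hIntT0.mono_set hP1sub) (hyInt.const_mul q) hP1m
    rintro ⟨y, k⟩ ⟨_, hk⟩
    simp only [mem_singleton_iff] at hk
    exact hgqy (y, k) hk
  -- measure of P2 is finite
  have hP2fin : ρm P2 < ⊤ := by
    have hsub : P2 ⊆ {p : ℝ × ℕ | 1 ≤ min 1 p.1} := by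
      rintro ⟨y, k⟩ ⟨hy, _⟩
      simp only [mem_Ici] at hy
      simp [mem_setOf_eq, le_min_iff, hy]
    have h1 : ρm P2 = (ρm.restrict T0) P2 := by
      rw [Measure.restrict_apply hP2m, inter_eq_left.2 hP2sub]
    rw [h1]
    exact lt_of_le_of_lt (measure_mono hsub) (hρ0.measure_ge_lt_top one_pos)
  have hI2 : ∫ p in P2, g p ∂ρm ≤ (ρm P2).toReal := by
    have := setIntegral_mono_on (hIntT0.mono_set hP2sub)
      (integrableOn_const hP2fin.ne : IntegrableOn (fun _ => (1:ℝ)) P2 ρm)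
      hP2m (fun p _ => hgle1 p)
    simpa [setIntegral_const, measureReal_def] using this
  have hI3 : ∫ p in T1, g p ∂ρm ≤ (ρm T1).toReal := by
    have := setIntegral_mono_on hIntT1
      (integrableOn_const hρ1.ne : IntegrableOn (fun _ => (1:ℝ)) T1 ρm)
      hT1m (fun p _ => hgle1 p)
    simpa [setIntegral_const, measureReal_def] using this
  -- rewrite the Ψ integral
  have hI : ∫ p in S, (Real.exp (-q * p.1) * r ^ (p.2 + 1) - r) ∂ρm
      = -r * ∫ p in S, g p ∂ρm := by
    rw [← integral_const_mul]
    apply integral_congr_ae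
    apply Filter.Eventually.of_forall
    intro p
    simp only [hgdef, pow_succ]
    ring
  have hKey : -(Real.exp η * PsiD b d kk ρm q r) =
      (∫ p in S, g p ∂ρm) + b * q - Real.exp η * (d * (1 - r)) + kk := by
    simp only [PsiD, ← hSdef, hI]
    linear_combination ((∫ p in S, g p ∂ρm) + b * q + kk) * her
  have hpos : 0 ≤ Real.exp η * (d * (1 - r)) := by
    apply mul_nonneg (Real.exp_pos _).le
    apply mul_nonneg hd
    linarith
  rw [hKey]
  have hSle : ∫ p in S, g p ∂ρm ≤
      q * (∫ p in P1, p.1 ∂ρm) + (ρm P2).toReal + (ρm T1).toReal := by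
    rw [hsplit, hI0]
    linarith
  have hJ : 0 ≤ ∫ p in P1, p.1 ∂ρm := by
    apply setIntegral_nonneg hP1m
    rintro ⟨y, k⟩ ⟨hy, _⟩
    exact (le_of_lt hy.1)
  nlinarith [hSle, hq.le]
end
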